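/- The λ-natural norm is independent of the ambient dimension: let 0 < n ≤ p ≤ p' be integers, λ real with n ≤ λ ≤ p, and let A be a simplicial n-chain in ℝ^p, viewed also as a simplicial n-chain in ℝ^{p'} via the standard inclusion ℝ^p ⊂ ℝ^{p'}. Then the λ-natural norm of A computed in ℝ^p equals the λ-natural norm of A computed in ℝ^{p'}. -/

import Mathlib

open MeasureTheory Filter Metric Set

noncomputable section

/-- Euclidean `m`-space `ℝ^m`. -/
abbrev Euc (m : ℕ) : Type := EuclideanSpace ℝ (Fin m)

/-- An oriented `n`-simplex in `ℝ^m`, recorded by its ordered list of `n+1` vertices. -/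
abbrev Splx (n m : ℕ) : Type := Fin (n + 1) → Euc m

/-- Formal sums `Σ aᵢ σᵢ` of oriented `n`-simplices in `ℝ^m` with real coefficients. -/
abbrev FormalSum (n m : ℕ) : Type := Splx n m →₀ ℝ

/-- Unbundled (raw) `n`-forms on `ℝ^m`: a scalar depending on a point and `n` vectors. -/
abbrev RawForm (n m : ℕ) : Type := Euc m → (Fin n → Euc m) → ℝ

/-- Continuous multilinear maps in `n` variables on `ℝ^m` (the value space of forms). -/
abbrev CMM (n m : ℕ) : Type := ContinuousMultilinearMap ℝ (fun _ : Fin n => Euc m) ℝ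

/-- A multilinear map is alternating. -/
def IsAlt {n m : ℕ} (g : CMM n m) : Prop :=
  ∀ (v : Fin n → Euc m) (i j : Fin n), i ≠ j → v i = v j → g v = 0

/-- A differential `n`-form on `ℝ^m`: an alternating-multilinear-map valued function. -/
def Form (n m : ℕ) : Type := {ω : Euc m → CMM n m // ∀ x, IsAlt (ω x)}

/-- The raw form underlying a differential form. -/
def Form.raw {n m : ℕ} (ω : Form n m) : RawForm n m := fun x v => ω.1 x v

/-- The standard `n`-simplex as a subset of `ℝ^n`. -/
def stdSimplexSet (n : ℕ) : Set (Fin n → ℝ) := {t | (∀ i, 0 ≤ t i) ∧ ∑ i, t i ≤ 1}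

/-- The (Riemann/Lebesgue) integral of a raw `n`-form over an oriented `n`-simplex,
computed through the affine parametrization by the standard simplex. -/
def simplexIntegral {n m : ℕ} (σ : Splx n m) (ω : RawForm n m) : ℝ :=
  ∫ t in stdSimplexSet n,
    ω (σ 0 + ∑ i : Fin n, t i • (σ i.succ - σ 0)) (fun i => σ i.succ - σ 0)

/-- Integration of a raw `n`-form over formal sums, as a linear map in the chain. -/
def chainIntegralL (n m : ℕ) (ω : RawForm n m) : FormalSum n m →ₗ[ℝ] ℝ :=
  Finsupp.linearCombination ℝ (fun σ => simplexIntegral σ ω)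

/-- `∫_A ω` for a formal sum `A = Σ aᵢ σᵢ`. -/
def chainIntegral {n m : ℕ} (A : FormalSum n m) (ω : RawForm n m) : ℝ :=
  chainIntegralL n m ω A

/-- The submodule of formal sums that are *null*, i.e. integrate to `0` against every
continuous differential `n`-form.  Two formal sums define the same simplicial chain
(the coefficient functions on each affine `n`-plane agree off a Lebesgue null set)
precisely when their difference is null. -/
def nullChains (n m : ℕ) : Submodule ℝ (FormalSum n m) :=
  ⨅ ω ∈ {ω : Form n m | Continuous ω.1}, LinearMap.ker (chainIntegralL n m ω.raw)

/-- Equivalence of formal sums: they represent the same simplicial chain. -/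
def ChainEquiv {n m : ℕ} (A B : FormalSum n m) : Prop := A - B ∈ nullChains n m

/-- The `n`-dimensional volume of an `n`-simplex in `ℝ^m` (Gram determinant formula). -/
def simplexVolume {n m : ℕ} (σ : Splx n m) : ℝ :=
  Real.sqrt (Matrix.det (Matrix.of fun i j : Fin n =>
    (inner ℝ (σ i.succ - σ 0) (σ j.succ - σ 0) : ℝ))) / (Nat.factorial n : ℝ)

/-- The `n`-element coordinate subsets of `Fin m`, indexing coordinate `n`-planes. -/
def coordPlanes (m k : ℕ) : Finset (Finset (Fin m)) :=
  Finset.univ.filter fun s => s.card = k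

/-- Orthogonal projection of `ℝ^m` onto the coordinate plane indexed by `s`. -/
def coordProj (m : ℕ) (s : Finset (Fin m)) : Euc m → Euc m :=
  fun x => WithLp.toLp 2 (fun i => if i ∈ s then x i else 0)

/-- The projected `λ`-mass `M_{λ,π}(A) = inf { Σ |aᵢ| (Mₙ(π σᵢ))^{λ/n} : Σ aᵢσᵢ ∼ A }`. -/
def projMass (n m : ℕ) (lam : ℝ) (p : Euc m → Euc m) (A : FormalSum n m) : ℝ :=
  sInf { r | ∃ B : FormalSum n m, ChainEquiv B A ∧
    r = ∑ σ ∈ B.support, |B σ| * simplexVolume (p ∘ σ) ^ (lam / n) }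

/-- The `n`-mass of a simplicial `n`-chain. -/
def massNorm (n m : ℕ) (A : FormalSum n m) : ℝ := projMass n m n id A

/-- The simplicial boundary operator on formal sums. -/
def boundaryL (n m : ℕ) : FormalSum (n + 1) m →ₗ[ℝ] FormalSum n m :=
  Finsupp.linearCombination ℝ (fun σ => ∑ i : Fin (n + 2),
    Finsupp.single (fun j => σ (i.succAbove j)) ((-1 : ℝ) ^ (i : ℕ)))

/-- Whitney's flat norm `|A|^♭ = inf { Mₙ(A - ∂C) + M_{n+1}(C) }`. -/
def flatNorm (n m : ℕ) (A : FormalSum n m) : ℝ :=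
  sInf { r | ∃ C : FormalSum (n + 1) m,
    r = massNorm n m (A - boundaryL n m C) + massNorm (n + 1) m C }

/-- Auxiliary recursion (on `fuel`, the integer part of `λ - n`) for the natural norms. -/
def naturalNormAux (m : ℕ) : ℕ → (n : ℕ) → ℝ → FormalSum n m → ℝ
  | 0, n, lam, A => ∑ s ∈ coordPlanes m n, projMass n m lam (coordProj m s) A
  | fuel + 1, n, lam, A =>
    if lam ≤ n then ∑ s ∈ coordPlanes m n, projMass n m lam (coordProj m s) A
    else ∑ s ∈ coordPlanes m n,
      sInf { r | ∃ C : FormalSum (n + 1) m,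
        r = projMass n m n (coordProj m s) (A - boundaryL n m C)
          + naturalNormAux m fuel (n + 1) lam C }

/-- The `λ`-natural norm `|A|^♮_λ` of a simplicial `n`-chain in `ℝ^m`. -/
def naturalNorm (n m : ℕ) (lam : ℝ) (A : FormalSum n m) : ℝ :=
  naturalNormAux m (m - n) n lam A

/-- A sequence of simplicial `n`-chains that is Cauchy in the `λ`-natural norm;
such sequences represent the elements of the completion `X_{n,λ}(ℝ^m)`. -/
def NatCauchy (n m : ℕ) (lam : ℝ) (A : ℕ → FormalSum n m) : Prop :=
  ∀ ε > 0, ∃ N, ∀ j ≥ N, ∀ k ≥ N, naturalNorm n m lam (A j - A k) < ε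

/-- `K` is a `C^s`-(Hölder-)bound for `f`: all derivatives up to order `⌊s⌋` are bounded
by `K` and the top ones are `(s - ⌊s⌋)`-Hölder with constant `K`. -/
def HolderBound {E F : Type} [NormedAddCommGroup E] [NormedSpace ℝ E]
    [NormedAddCommGroup F] [NormedSpace ℝ F] (s : ℝ) (f : E → F) (K : ℝ) : Prop :=
  0 ≤ K ∧ ContDiff ℝ (⌊s⌋₊) f ∧
    (∀ j ≤ ⌊s⌋₊, ∀ x, ‖iteratedFDeriv ℝ j f x‖ ≤ K) ∧
    (∀ x y, ‖iteratedFDeriv ℝ ⌊s⌋₊ f x - iteratedFDeriv ℝ ⌊s⌋₊ f y‖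
      ≤ K * ‖x - y‖ ^ (s - ⌊s⌋₊))

/-- `f` is of class `C^s` (with finite `C^s` norm). -/
def IsCs {E F : Type} [NormedAddCommGroup E] [NormedSpace ℝ E]
    [NormedAddCommGroup F] [NormedSpace ℝ F] (s : ℝ) (f : E → F) : Prop :=
  ∃ K, HolderBound s f K

/-- The `C^s` (Hölder) norm of `f`. -/
def holderNorm {E F : Type} [NormedAddCommGroup E] [NormedSpace ℝ E]
    [NormedAddCommGroup F] [NormedSpace ℝ F] (s : ℝ) (f : E → F) : ℝ :=
  sInf {K | HolderBound s f K}

/-- The exterior derivative of a differential `n`-form, as a raw `(n+1)`-form. -/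
def extDerivRaw {n m : ℕ} (ω : Form n m) : RawForm (n + 1) m :=
  fun x v => ∑ i : Fin (n + 1),
    (-1 : ℝ) ^ (i : ℕ) * fderiv ℝ ω.1 x (v i) (fun j => v (i.succAbove j))


/-- The standard inclusion `ℝ^p ⊆ ℝ^{p'}` (zero-padding the extra coordinates). -/
def inclPt (p p' : ℕ) (x : Euc p) : Euc p' :=
  WithLp.toLp 2 (fun i : Fin p' => if h : (i : ℕ) < p then x ⟨(i : ℕ), h⟩ else 0)

/-- A simplex in `ℝ^p` viewed in `ℝ^{p'}`. -/
def inclSplx (n p p' : ℕ) (σ : Splx n p) : Splx n p' := fun j => inclPt p p' (σ j)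

/-- A simplicial chain in `ℝ^p` viewed in `ℝ^{p'}`. -/
def inclChain (n p p' : ℕ) : FormalSum n p → FormalSum n p' :=
  Finsupp.mapDomain (inclSplx n p p')

/-!
Write `ι : ℝ^p → ℝ^{p'}` for the inclusion and `τ` for the truncation, so that `τ ∘ ι = id`.
Both push chains forward, commute with `∂` and preserve null chains. A coordinate plane of
`ℝ^{p'}` either comes from one of `ℝ^p`, and then `ι` is an isometry intertwining the two
projections, or it uses a coordinate `≥ p`, onto which every simplex of `ℝ^p` projects to a
degenerate one, of weight `0 ^ (λ / n) = 0`. Induction along the recursion shows that neither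
`ι` nor `τ` increases the natural norm, so `ι` preserves it. Finally the recursion stabilizes
once its fuel reaches `λ - n`, so the fuels `p - n` and `p' - n` give the same norm.
-/

def chainMap {k a b : ℕ} (L : Euc a →ₗ[ℝ] Euc b) : FormalSum k a →ₗ[ℝ] FormalSum k b :=
  Finsupp.lmapDomain ℝ ℝ (L ∘ ·)

lemma chainMap_apply {k a b : ℕ} (L : Euc a →ₗ[ℝ] Euc b) (A : FormalSum k a) :
    chainMap L A = Finsupp.mapDomain (L ∘ ·) A := rfl

lemma chainMap_comp {k a b c : ℕ} (L : Euc b →ₗ[ℝ] Euc c) (L' : Euc a →ₗ[ℝ] Euc b)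
    (A : FormalSum k a) : chainMap L (chainMap L' A) = chainMap (L.comp L') A := by
  rw [chainMap_apply, chainMap_apply, chainMap_apply, ← Finsupp.mapDomain_comp]
  rfl

lemma boundaryL_chainMap {k a b : ℕ} (L : Euc a →ₗ[ℝ] Euc b) (C : FormalSum (k + 1) a) :
    boundaryL k b (chainMap L C) = chainMap L (boundaryL k a C) := by
  suffices (boundaryL k b).comp (chainMap (k := k + 1) L) = (chainMap L).comp (boundaryL k a) from
    LinearMap.congr_fun this C
  refine Finsupp.lhom_ext fun σ c => ?_
  simp only [LinearMap.comp_apply, chainMap_apply, Finsupp.mapDomain_single, boundaryL,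
    Finsupp.linearCombination_single, Finsupp.mapDomain_smul, Finsupp.mapDomain_finsetSum]
  rfl

def Form.pullback {k a b : ℕ} (L : Euc a →L[ℝ] Euc b) (ω : Form k b) : Form k a :=
  ⟨fun x => (ω.1 (L x)).compContinuousLinearMap fun _ => L,
    fun x v i j hij hv => ω.2 (L x) _ i j hij (by simp only [hv])⟩

lemma Form.continuous_pullback {k a b : ℕ} (L : Euc a →L[ℝ] Euc b) {ω : Form k b}
    (hω : Continuous ω.1) : Continuous (ω.pullback L).1 :=
  (ContinuousMultilinearMap.compContinuousLinearMapL fun _ => L).continuous.comp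
    (hω.comp L.continuous)

lemma simplexIntegral_comp {k a b : ℕ} (L : Euc a →L[ℝ] Euc b) (σ : Splx k a) (ω : Form k b) :
    simplexIntegral (L ∘ σ) ω.raw = simplexIntegral σ (ω.pullback L).raw := by
  simp only [simplexIntegral, Form.raw, Form.pullback, Function.comp_apply,
    ContinuousMultilinearMap.compContinuousLinearMap_apply, map_add, map_sum, map_smul, map_sub]

lemma chainMap_mem_nullChains {k a b : ℕ} (L : Euc a →ₗ[ℝ] Euc b) {A : FormalSum k a}
    (hA : A ∈ nullChains k a) : chainMap L A ∈ nullChains k b := by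
  simp only [nullChains, Submodule.mem_iInf, LinearMap.mem_ker, Set.mem_ofPred_eq] at hA ⊢
  intro ω hω
  let L' := LinearMap.toContinuousLinearMap L
  have hcomp : (fun σ => simplexIntegral σ ω.raw) ∘ (L ∘ ·)
      = fun σ : Splx k a => simplexIntegral σ (ω.pullback L').raw :=
    funext fun σ => simplexIntegral_comp L' σ ω
  rw [chainMap_apply, chainIntegralL, Finsupp.linearCombination_mapDomain, hcomp]
  exact hA _ (ω.continuous_pullback L' hω)

lemma ChainEquiv.refl {k m : ℕ} (A : FormalSum k m) : ChainEquiv A A := by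
  simp [ChainEquiv, zero_mem]

lemma ChainEquiv.chainMap {k a b : ℕ} (L : Euc a →ₗ[ℝ] Euc b) {A B : FormalSum k a}
    (h : ChainEquiv A B) : ChainEquiv (chainMap L A) (chainMap L B) := by
  rw [ChainEquiv, ← map_sub]
  exact chainMap_mem_nullChains L h

/-- For `q' < q` this is the truncation `ℝ^q → ℝ^{q'}`. -/
def inclPtLinear (q q' : ℕ) : Euc q →ₗ[ℝ] Euc q' where
  toFun := inclPt q q'
  map_add' x y := by ext i; simp only [inclPt, PiLp.add_apply]; split_ifs <;> simp
  map_smul' c x := by ext i; simp only [inclPt, PiLp.smul_apply]; split_ifs <;> simp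

@[simp] lemma coe_inclPtLinear (q q' : ℕ) : ⇑(inclPtLinear q q') = inclPt q q' := rfl

lemma inclPt_inclPt_of_le {p p' : ℕ} (h : p ≤ p') (x : Euc p) :
    inclPt p' p (inclPt p p' x) = x := by
  ext ⟨i, hi⟩
  simp [inclPt, hi.trans_le h]

lemma chainMap_inclPt_inclPt_of_le {k p p' : ℕ} (h : p ≤ p') (A : FormalSum k p) :
    chainMap (inclPtLinear p' p) (chainMap (inclPtLinear p p') A) = A := by
  have hid : (inclPtLinear p' p).comp (inclPtLinear p p') = LinearMap.id :=
    LinearMap.ext (inclPt_inclPt_of_le h)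
  rw [chainMap_comp, hid, chainMap_apply]
  exact Finsupp.mapDomain_id

lemma norm_inclPt {p p' : ℕ} (h : p ≤ p') (x : Euc p) : ‖inclPt p p' x‖ = ‖x‖ := by
  let g : ℕ → ℝ := fun i => if hi : i < p then ‖x ⟨i, hi⟩‖ ^ 2 else 0
  have hsum : ∑ i ∈ Finset.range p', g i = ∑ i ∈ Finset.range p, g i :=
    (Finset.sum_subset (Finset.range_subset_range.2 h) fun i _ hi => by
      simp [g, Finset.mem_range.not.1 hi]).symm
  have hp' : ∑ i : Fin p', ‖inclPt p p' x i‖ ^ 2 = ∑ i : Fin p', g i := by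
    simp [inclPt, g]
  have hp : ∑ i : Fin p, ‖x i‖ ^ 2 = ∑ i : Fin p, g i := by simp [g]
  rw [EuclideanSpace.norm_eq, EuclideanSpace.norm_eq, hp', hp, Fin.sum_univ_eq_sum_range g,
    Fin.sum_univ_eq_sum_range g, hsum]

def inclPtIsometry {p p' : ℕ} (h : p ≤ p') : Euc p →ₗᵢ[ℝ] Euc p' :=
  ⟨inclPtLinear p p', norm_inclPt h⟩

lemma mem_map_castLEEmb {p p' : ℕ} (h : p ≤ p') {s : Finset (Fin p)} {i : Fin p'} :
    i ∈ s.map (Fin.castLEEmb h) ↔ ∃ hi : (i : ℕ) < p, (⟨i, hi⟩ : Fin p) ∈ s := by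
  simp only [Finset.mem_map, Fin.castLEEmb_apply]
  constructor
  · rintro ⟨a, ha, rfl⟩
    exact ⟨a.2, ha⟩
  · rintro ⟨hi, hs⟩
    exact ⟨_, hs, rfl⟩

lemma coordProj_map_castLE {p p' : ℕ} (h : p ≤ p') (s : Finset (Fin p)) (x : Euc p') :
    coordProj p' (s.map (Fin.castLEEmb h)) x = inclPt p p' (coordProj p s (inclPt p' p x)) := by
  ext i
  simp only [coordProj, inclPt, PiLp.toLp_apply, mem_map_castLEEmb h]
  by_cases hi : (i : ℕ) < p <;> simp [hi]

lemma simplexVolume_nonneg {k m : ℕ} (σ : Splx k m) : 0 ≤ simplexVolume σ := by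
  unfold simplexVolume
  positivity

lemma simplexVolume_eq_gram {k m : ℕ} (σ : Splx k m) :
    simplexVolume σ
      = Real.sqrt (Matrix.gram ℝ fun i : Fin k => σ i.succ - σ 0).det / (Nat.factorial k : ℝ) :=
  rfl

lemma simplexVolume_linearIsometry_comp {k a b : ℕ} (L : Euc a →ₗᵢ[ℝ] Euc b) (σ : Splx k a) :
    simplexVolume (L ∘ σ) = simplexVolume σ := by
  simp only [simplexVolume, Function.comp_apply, ← map_sub, LinearIsometry.inner_map_map]

lemma simplexVolume_eq_zero_of_card_lt {k m : ℕ} (t : Finset (Fin m)) (ht : t.card < k)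
    (σ : Splx k m) (hσ : ∀ j, ∀ i ∉ t, σ j i = 0) : simplexVolume σ = 0 := by
  let W := Submodule.span ℝ (Set.range fun i : t => EuclideanSpace.single (i : Fin m) (1 : ℝ))
  have hW : Module.finrank ℝ W < k :=
    ((finrank_range_le_card _).trans_eq (Fintype.card_coe t)).trans_lt ht
  have hmem : ∀ j, σ j ∈ W := by
    intro j
    have : σ j = ∑ i ∈ t, σ j i • EuclideanSpace.single i (1 : ℝ) := by
      ext i'
      by_cases hi : i' ∈ t <;> simp [Pi.single_apply, Finset.sum_ite_eq, hi, hσ j i']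
    rw [this]
    exact Submodule.sum_mem _ fun i hi =>
      Submodule.smul_mem _ _ (Submodule.subset_span ⟨⟨i, hi⟩, rfl⟩)
  have hdep : ¬ LinearIndependent ℝ fun i : Fin k => σ i.succ - σ 0 := by
    intro hli
    have hle : Submodule.span ℝ (Set.range fun i : Fin k => σ i.succ - σ 0) ≤ W :=
      Submodule.span_le.2 <| Set.range_subset_iff.2 fun i => W.sub_mem (hmem _) (hmem _)
    have hk := Submodule.finrank_mono hle
    rw [finrank_span_eq_card hli, Fintype.card_fin] at hk
    exact hW.not_ge hk
  rw [simplexVolume_eq_gram, not_imp_comm.1 Matrix.det_gram_ne_zero_iff_linearIndependent.1 hdep,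
    Real.sqrt_zero, zero_div]

lemma simplexVolume_coordProj_inclPt_eq_zero {k p p' : ℕ} {s : Finset (Fin p')}
    (hs : s.card = k) {i₀ : Fin p'} (hi₀ : i₀ ∈ s) (hp : p ≤ (i₀ : ℕ)) (σ : Splx k p) :
    simplexVolume (coordProj p' s ∘ inclPtLinear p p' ∘ σ) = 0 := by
  refine simplexVolume_eq_zero_of_card_lt (s.filter fun i => (i : ℕ) < p) ?_ _ fun j i hi => ?_
  · exact hs ▸ Finset.card_lt_card (Finset.filter_ssubset.2 ⟨i₀, hi₀, hp.not_gt⟩)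
  · simp only [Finset.mem_filter, not_and] at hi
    by_cases his : i ∈ s <;> simp [coordProj, inclPt, his, hi]

lemma simplexVolume_coordProj_truncate {k p p' : ℕ} (h : p ≤ p') (s : Finset (Fin p))
    (σ : Splx k p') :
    simplexVolume (coordProj p s ∘ inclPtLinear p' p ∘ σ)
      = simplexVolume (coordProj p' (s.map (Fin.castLEEmb h)) ∘ σ) := by
  have : coordProj p' (s.map (Fin.castLEEmb h)) ∘ σ
      = inclPtIsometry h ∘ (coordProj p s ∘ inclPtLinear p' p ∘ σ) :=
    funext fun j => coordProj_map_castLE h s (σ j)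
  rw [this, simplexVolume_linearIsometry_comp]

lemma simplexVolume_coordProj_map_castLE_inclPt {k p p' : ℕ} (h : p ≤ p') (s : Finset (Fin p))
    (σ : Splx k p) :
    simplexVolume (coordProj p' (s.map (Fin.castLEEmb h)) ∘ inclPtLinear p p' ∘ σ)
      = simplexVolume (coordProj p s ∘ σ) := by
  rw [← simplexVolume_coordProj_truncate h]
  congr 2
  exact funext fun j => inclPt_inclPt_of_le h (σ j)

lemma Finsupp.sum_abs_mapDomain_mul_le {α β : Type*} (f : α → β) (B : α →₀ ℝ) {w : β → ℝ}
    (hw : ∀ b, 0 ≤ w b) :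
    ∑ b ∈ (B.mapDomain f).support, |B.mapDomain f b| * w b
      ≤ ∑ a ∈ B.support, |B a| * w (f a) := by
  classical
  calc ∑ b ∈ (B.mapDomain f).support, |B.mapDomain f b| * w b
      = ∑ b ∈ B.support.image f, |B.mapDomain f b| * w b :=
        Finset.sum_subset Finsupp.mapDomain_support fun b _ hb => by
          rw [Finsupp.notMem_support_iff.1 hb, abs_zero, zero_mul]
    _ ≤ ∑ b ∈ B.support.image f, ∑ a ∈ B.support with f a = b, |B a| * w (f a) := by
        refine Finset.sum_le_sum fun b hb => ?_
        obtain ⟨a, -, rfl⟩ := Finset.mem_image.1 hb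
        rw [Finsupp.mapDomain_apply_eq_sum, Finset.sum_congr rfl fun i hi =>
          congrArg (|B i| * w ·) (Finset.mem_filter.1 hi).2, ← Finset.sum_mul]
        exact mul_le_mul_of_nonneg_right (Finset.abs_sum_le_sum_abs _ _) (hw _)
    _ = ∑ a ∈ B.support, |B a| * w (f a) :=
        Finset.sum_fiberwise_of_maps_to (fun a ha => Finset.mem_image_of_mem f ha) _

def formalProjMass (k m : ℕ) (e : ℝ) (π : Euc m → Euc m) (B : FormalSum k m) : ℝ :=
  ∑ σ ∈ B.support, |B σ| * simplexVolume (π ∘ σ) ^ (e / k)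

section projMass

variable {k m : ℕ} {e : ℝ} {π : Euc m → Euc m}

lemma formalProjMass_nonneg (B : FormalSum k m) : 0 ≤ formalProjMass k m e π B :=
  Finset.sum_nonneg fun _ _ =>
    mul_nonneg (abs_nonneg _) (Real.rpow_nonneg (simplexVolume_nonneg _) _)

lemma projMass_le_formalProjMass {A B : FormalSum k m} (hB : ChainEquiv B A) :
    projMass k m e π A ≤ formalProjMass k m e π B :=
  csInf_le ⟨0, by rintro r ⟨B', -, rfl⟩; exact formalProjMass_nonneg B'⟩ ⟨B, hB, rfl⟩

lemma le_projMass {A : FormalSum k m} {c : ℝ}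
    (h : ∀ B, ChainEquiv B A → c ≤ formalProjMass k m e π B) : c ≤ projMass k m e π A :=
  le_csInf ⟨_, A, ChainEquiv.refl A, rfl⟩ fun _ ⟨B, hB, hr⟩ => hr ▸ h B hB

lemma projMass_nonneg (A : FormalSum k m) : 0 ≤ projMass k m e π A :=
  le_projMass fun B _ => formalProjMass_nonneg B

lemma projMass_eq_zero_of_simplexVolume_eq_zero (he : e ≠ 0) (hk : k ≠ 0) {A : FormalSum k m}
    (hA : ∀ σ ∈ A.support, simplexVolume (π ∘ σ) = 0) : projMass k m e π A = 0 := by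
  refine le_antisymm ((projMass_le_formalProjMass (ChainEquiv.refl A)).trans_eq ?_)
    (projMass_nonneg A)
  refine Finset.sum_eq_zero fun σ hσ => ?_
  rw [hA σ hσ, Real.zero_rpow (div_ne_zero he (Nat.cast_ne_zero.2 hk)), mul_zero]

lemma projMass_zero : projMass k m e π 0 = 0 :=
  le_antisymm ((projMass_le_formalProjMass (ChainEquiv.refl 0)).trans_eq (by simp [formalProjMass]))
    (projMass_nonneg 0)

end projMass

lemma projMass_chainMap_le {k a b : ℕ} {e : ℝ} (L : Euc a →ₗ[ℝ] Euc b) {π : Euc b → Euc b}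
    {π' : Euc a → Euc a} (hvol : ∀ σ : Splx k a, simplexVolume (π ∘ L ∘ σ) = simplexVolume (π' ∘ σ))
    (A : FormalSum k a) : projMass k b e π (chainMap L A) ≤ projMass k a e π' A := by
  refine le_projMass fun B hB => (projMass_le_formalProjMass (hB.chainMap L)).trans ?_
  refine (Finsupp.sum_abs_mapDomain_mul_le _ B
    fun _ => Real.rpow_nonneg (simplexVolume_nonneg _) _).trans_eq ?_
  simp only [formalProjMass, hvol]

lemma coordPlanes_image_map_castLE {p p' : ℕ} (h : p ≤ p') (k : ℕ) :
    (coordPlanes p k).image (Finset.map (Fin.castLEEmb h))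
      = {s ∈ coordPlanes p' k | ∀ i ∈ s, i.val < p} := by
  ext s
  simp only [coordPlanes, Finset.mem_image, Finset.mem_filter, Finset.mem_univ, true_and]
  constructor
  · rintro ⟨s₀, rfl, rfl⟩
    exact ⟨Finset.card_map _, fun i hi => ((mem_map_castLEEmb h).1 hi).1⟩
  · rintro ⟨hcard, hs⟩
    let s₀ := s.preimage (Fin.castLE h) (Fin.castLE_injective h).injOn
    have hmap : s₀.map (Fin.castLEEmb h) = s := by
      ext i
      simp only [mem_map_castLEEmb h, s₀, Finset.mem_preimage]
      exact ⟨fun ⟨_, hi⟩ => hi, fun hi => ⟨hs i hi, hi⟩⟩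
    exact ⟨s₀, by rw [← hcard, ← hmap, Finset.card_map], hmap⟩

lemma sum_coordPlanes_map_castLE {p p' k : ℕ} (h : p ≤ p') (G : Finset (Fin p') → ℝ) :
    ∑ s ∈ coordPlanes p k, G (s.map (Fin.castLEEmb h))
      = ∑ s ∈ coordPlanes p' k with ∀ i ∈ s, i.val < p, G s := by
  rw [← coordPlanes_image_map_castLE h,
    Finset.sum_image fun _ _ _ _ hst => Finset.map_injective _ hst]

lemma sum_coordPlanes_le_sum_coordPlanes_of_le_map {p p' k : ℕ} (h : p ≤ p')
    {F : Finset (Fin p) → ℝ} {G : Finset (Fin p') → ℝ}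
    (hFG : ∀ s ∈ coordPlanes p k, F s ≤ G (s.map (Fin.castLEEmb h))) (hG : ∀ s, 0 ≤ G s) :
    ∑ s ∈ coordPlanes p k, F s ≤ ∑ s ∈ coordPlanes p' k, G s :=
  (Finset.sum_le_sum hFG).trans <| (sum_coordPlanes_map_castLE h G).trans_le <|
    Finset.sum_le_sum_of_subset_of_nonneg (Finset.filter_subset _ _) fun s _ _ => hG s

lemma sum_coordPlanes_le_sum_coordPlanes_of_map_le {p p' k : ℕ} (h : p ≤ p')
    {F : Finset (Fin p) → ℝ} {G : Finset (Fin p') → ℝ}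
    (hGF : ∀ s ∈ coordPlanes p k, G (s.map (Fin.castLEEmb h)) ≤ F s)
    (hG : ∀ s ∈ coordPlanes p' k, ∀ i ∈ s, p ≤ (i : ℕ) → G s = 0) :
    ∑ s ∈ coordPlanes p' k, G s ≤ ∑ s ∈ coordPlanes p k, F s := by
  rw [← Finset.sum_filter_of_ne fun s hs hGs i hi => not_le.1 fun hpi => hGs (hG s hs i hi hpi),
    ← sum_coordPlanes_map_castLE h]
  exact Finset.sum_le_sum hGF

def descentInf (m fuel k : ℕ) (lam : ℝ) (s : Finset (Fin m)) (A : FormalSum k m) : ℝ :=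
  sInf {r | ∃ C : FormalSum (k + 1) m,
    r = projMass k m k (coordProj m s) (A - boundaryL k m C) + naturalNormAux m fuel (k + 1) lam C}

section naturalNormAux

variable {m fuel k : ℕ} {lam : ℝ}

lemma naturalNormAux_fuel_zero (A : FormalSum k m) :
    naturalNormAux m 0 k lam A = ∑ s ∈ coordPlanes m k, projMass k m lam (coordProj m s) A :=
  rfl

lemma naturalNormAux_succ_of_le (h : lam ≤ k) (A : FormalSum k m) :
    naturalNormAux m (fuel + 1) k lam A = naturalNormAux m 0 k lam A :=
  if_pos h

lemma naturalNormAux_succ_of_lt (h : (k : ℝ) < lam) (A : FormalSum k m) :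
    naturalNormAux m (fuel + 1) k lam A = ∑ s ∈ coordPlanes m k, descentInf m fuel k lam s A :=
  if_neg h.not_ge

lemma naturalNormAux_nonneg (A : FormalSum k m) : 0 ≤ naturalNormAux m fuel k lam A := by
  induction fuel generalizing k with
  | zero => exact Finset.sum_nonneg fun _ _ => projMass_nonneg A
  | succ fuel ih =>
    rcases le_or_gt lam k with hk | hk
    · rw [naturalNormAux_succ_of_le hk]
      exact Finset.sum_nonneg fun _ _ => projMass_nonneg A
    · rw [naturalNormAux_succ_of_lt hk]
      exact Finset.sum_nonneg fun _ _ => Real.sInf_nonneg fun _ ⟨C, hC⟩ =>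
        hC ▸ add_nonneg (projMass_nonneg _) (ih C)

variable {s : Finset (Fin m)} {A : FormalSum k m}

lemma descentInf_le (C : FormalSum (k + 1) m) :
    descentInf m fuel k lam s A ≤
      projMass k m k (coordProj m s) (A - boundaryL k m C) + naturalNormAux m fuel (k + 1) lam C :=
  csInf_le ⟨0, fun _ ⟨C', hC'⟩ => hC' ▸ add_nonneg (projMass_nonneg _) (naturalNormAux_nonneg C')⟩
    ⟨C, rfl⟩

lemma le_descentInf {c : ℝ} (h : ∀ C : FormalSum (k + 1) m, c ≤
      projMass k m k (coordProj m s) (A - boundaryL k m C) + naturalNormAux m fuel (k + 1) lam C) :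
    c ≤ descentInf m fuel k lam s A :=
  le_csInf ⟨_, 0, rfl⟩ fun _ ⟨C, hC⟩ => hC ▸ h C

lemma descentInf_nonneg : 0 ≤ descentInf m fuel k lam s A :=
  le_descentInf fun C => add_nonneg (projMass_nonneg _) (naturalNormAux_nonneg C)

lemma naturalNormAux_zero_chain : naturalNormAux m fuel k lam (0 : FormalSum k m) = 0 := by
  induction fuel generalizing k with
  | zero => exact Finset.sum_eq_zero fun _ _ => projMass_zero
  | succ fuel ih =>
    rcases le_or_gt lam k with hk | hk
    · rw [naturalNormAux_succ_of_le hk]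
      exact Finset.sum_eq_zero fun _ _ => projMass_zero
    · rw [naturalNormAux_succ_of_lt hk]
      refine Finset.sum_eq_zero fun s _ =>
        le_antisymm ((descentInf_le 0).trans_eq ?_) descentInf_nonneg
      rw [map_zero, sub_zero, projMass_zero, ih, add_zero]

lemma descentInf_eq_zero_of_projMass_eq_zero (h : projMass k m k (coordProj m s) A = 0) :
    descentInf m fuel k lam s A = 0 := by
  refine le_antisymm ((descentInf_le 0).trans_eq ?_) descentInf_nonneg
  rw [map_zero, sub_zero, h, naturalNormAux_zero_chain, add_zero]

lemma naturalNormAux_fuel_succ (h : lam ≤ k + fuel) (A : FormalSum k m) :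
    naturalNormAux m (fuel + 1) k lam A = naturalNormAux m fuel k lam A := by
  induction fuel generalizing k with
  | zero => exact naturalNormAux_succ_of_le (by simpa using h) A
  | succ fuel ih =>
    rcases le_or_gt lam k with hk | hk
    · rw [naturalNormAux_succ_of_le hk, naturalNormAux_succ_of_le hk]
    · have hC : ∀ C : FormalSum (k + 1) m,
          naturalNormAux m (fuel + 1) (k + 1) lam C = naturalNormAux m fuel (k + 1) lam C :=
        ih (by push_cast at h ⊢; linarith)
      simp only [naturalNormAux_succ_of_lt hk, descentInf, hC]

lemma naturalNormAux_fuel_eq_of_le {f₁ f₂ : ℕ} (h : lam ≤ k + f₁) (hf : f₁ ≤ f₂)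
    (A : FormalSum k m) : naturalNormAux m f₂ k lam A = naturalNormAux m f₁ k lam A := by
  induction f₂, hf using Nat.le_induction with
  | base => rfl
  | succ f hf ih =>
    rw [naturalNormAux_fuel_succ (h.trans (by gcongr)) A, ih]

end naturalNormAux

lemma descentInf_chainMap_le {a b fuel k : ℕ} {lam : ℝ} (L : Euc a →ₗ[ℝ] Euc b)
    {s : Finset (Fin b)} {s' : Finset (Fin a)}
    (hvol : ∀ σ : Splx k a,
      simplexVolume (coordProj b s ∘ L ∘ σ) = simplexVolume (coordProj a s' ∘ σ))
    (haux : ∀ C : FormalSum (k + 1) a,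
      naturalNormAux b fuel (k + 1) lam (chainMap L C) ≤ naturalNormAux a fuel (k + 1) lam C)
    (A : FormalSum k a) :
    descentInf b fuel k lam s (chainMap L A) ≤ descentInf a fuel k lam s' A :=
  le_descentInf fun C => (descentInf_le (chainMap L C)).trans <| by
    rw [boundaryL_chainMap, ← map_sub]
    exact add_le_add (projMass_chainMap_le L hvol _) (haux C)

lemma projMass_chainMap_inclPt_eq_zero {k p p' : ℕ} {e : ℝ} (he : e ≠ 0) (hk : k ≠ 0)
    {s : Finset (Fin p')} (hs : s ∈ coordPlanes p' k) {i : Fin p'} (hi : i ∈ s) (hpi : p ≤ i)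
    (A : FormalSum k p) :
    projMass k p' e (coordProj p' s) (chainMap (inclPtLinear p p') A) = 0 := by
  classical
  refine projMass_eq_zero_of_simplexVolume_eq_zero he hk fun σ hσ => ?_
  obtain ⟨τ, -, rfl⟩ := Finset.mem_image.1 (Finsupp.mapDomain_support hσ)
  exact simplexVolume_coordProj_inclPt_eq_zero (Finset.mem_filter.1 hs).2 hi hpi τ

section inclusion

variable {p p' k : ℕ} {lam : ℝ}

lemma naturalNormAux_zero_chainMap_truncate_le (h : p ≤ p') (B : FormalSum k p') :
    naturalNormAux p 0 k lam (chainMap (inclPtLinear p' p) B) ≤ naturalNormAux p' 0 k lam B := by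
  rw [naturalNormAux_fuel_zero, naturalNormAux_fuel_zero]
  exact sum_coordPlanes_le_sum_coordPlanes_of_le_map h
    (fun s _ => projMass_chainMap_le _ (simplexVolume_coordProj_truncate h s) B)
    fun _ => projMass_nonneg B

lemma naturalNormAux_chainMap_truncate_le (h : p ≤ p') (fuel : ℕ) (B : FormalSum k p') :
    naturalNormAux p fuel k lam (chainMap (inclPtLinear p' p) B) ≤
      naturalNormAux p' fuel k lam B := by
  induction fuel generalizing k with
  | zero => exact naturalNormAux_zero_chainMap_truncate_le h B
  | succ fuel ih =>
    rcases le_or_gt lam k with hlk | hlk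
    · rw [naturalNormAux_succ_of_le hlk, naturalNormAux_succ_of_le hlk]
      exact naturalNormAux_zero_chainMap_truncate_le h B
    · rw [naturalNormAux_succ_of_lt hlk, naturalNormAux_succ_of_lt hlk]
      exact sum_coordPlanes_le_sum_coordPlanes_of_le_map h
        (fun s _ => descentInf_chainMap_le _ (simplexVolume_coordProj_truncate h s) ih B)
        fun _ => descentInf_nonneg

lemma naturalNormAux_zero_chainMap_inclPt_le (h : p ≤ p') (hk : k ≠ 0) (hlam : lam ≠ 0)
    (A : FormalSum k p) :
    naturalNormAux p' 0 k lam (chainMap (inclPtLinear p p') A) ≤ naturalNormAux p 0 k lam A := by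
  rw [naturalNormAux_fuel_zero, naturalNormAux_fuel_zero]
  exact sum_coordPlanes_le_sum_coordPlanes_of_map_le h
    (fun s _ => projMass_chainMap_le _ (simplexVolume_coordProj_map_castLE_inclPt h s) A)
    fun _ hs _ hi hpi => projMass_chainMap_inclPt_eq_zero hlam hk hs hi hpi A

lemma naturalNormAux_chainMap_inclPt_le (h : p ≤ p') (hk : k ≠ 0) (hlam : lam ≠ 0) (fuel : ℕ)
    (A : FormalSum k p) :
    naturalNormAux p' fuel k lam (chainMap (inclPtLinear p p') A) ≤
      naturalNormAux p fuel k lam A := by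
  induction fuel generalizing k with
  | zero => exact naturalNormAux_zero_chainMap_inclPt_le h hk hlam A
  | succ fuel ih =>
    rcases le_or_gt lam k with hlk | hlk
    · rw [naturalNormAux_succ_of_le hlk, naturalNormAux_succ_of_le hlk]
      exact naturalNormAux_zero_chainMap_inclPt_le h hk hlam A
    · rw [naturalNormAux_succ_of_lt hlk, naturalNormAux_succ_of_lt hlk]
      exact sum_coordPlanes_le_sum_coordPlanes_of_map_le h
        (fun s _ => descentInf_chainMap_le _ (simplexVolume_coordProj_map_castLE_inclPt h s)
          (ih k.succ_ne_zero) A)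
        fun _ hs _ hi hpi => descentInf_eq_zero_of_projMass_eq_zero
          (projMass_chainMap_inclPt_eq_zero (Nat.cast_ne_zero.2 hk) hk hs hi hpi A)

lemma naturalNormAux_chainMap_inclPt (h : p ≤ p') (hk : k ≠ 0) (hlam : lam ≠ 0) (fuel : ℕ)
    (A : FormalSum k p) :
    naturalNormAux p' fuel k lam (chainMap (inclPtLinear p p') A) = naturalNormAux p fuel k lam A :=
  (naturalNormAux_chainMap_inclPt_le h hk hlam fuel A).antisymm <| by
    simpa only [chainMap_inclPt_inclPt_of_le h] using
      naturalNormAux_chainMap_truncate_le h fuel (chainMap (inclPtLinear p p') A)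

end inclusion

/-- The `λ`-natural norm is independent of the ambient dimension: for
integers `0 < n ≤ p ≤ p'` and real `n ≤ λ ≤ p`, the `λ`-natural norm of a simplicial
`n`-chain `A` in `ℝ^p` equals the `λ`-natural norm of `A` viewed, via the standard
inclusion `ℝ^p ⊆ ℝ^{p'}`, as a chain in `ℝ^{p'}`. -/
theorem naturalNorm_ambient_independent (n p p' : ℕ) (hn : 0 < n) (h1 : n ≤ p) (h2 : p ≤ p')
    (lam : ℝ) (hl1 : (n : ℝ) ≤ lam) (hl2 : lam ≤ (p : ℝ)) (A : FormalSum n p) :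
    naturalNorm n p lam A = naturalNorm n p' lam (inclChain n p p' A) := by
  have hlam : lam ≠ 0 := ((Nat.cast_pos.2 hn).trans_le hl1).ne'
  have hfuel : lam ≤ n + (p - n : ℕ) := by rw [Nat.cast_sub h1]; linarith
  calc naturalNorm n p lam A = naturalNormAux p (p' - n) n lam A :=
        (naturalNormAux_fuel_eq_of_le hfuel (Nat.sub_le_sub_right h2 n) A).symm
    _ = naturalNorm n p' lam (inclChain n p p' A) :=
        (naturalNormAux_chainMap_inclPt h2 hn.ne' hlam (p' - n) A).symm

end
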